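/- arXiv:2601.15700 — 4 statements merged into one kernel-verified Lean document; each statement's English description precedes it below -/
import Mathlib

section
/- Let D be a positive integer with D ≡ 1 (mod 4), and let ρ′ be the ℚ-algebra homomorphism from Q = (−2, D)_ℚ into 2×2 complex matrices determined by ρ′(i) = [[√−2, 2√−2·B/A],[0, −√−2]] and ρ′(j) = [[−B, (D − B²)/A],[A, B]] with A = 2 and B = 1. Then the set {α ∈ Q : all four entries of ρ′(α) lie in O₂} is exactly the ℤ-submodule of Q spanned by 1, i, (1 + j)/2, and (i + ij)/2; i.e. this set is the ℤ-order ℤ[1, i, (1+j)/2, (i+ij)/2]. -/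
open Quaternion

/-- √−2 : the complex number with square −2 and positive imaginary part. -/
noncomputable def sqrtNeg2 : ℂ := Real.sqrt 2 * Complex.I

/-- Membership in the ring O₂ = ℤ[√−2] ⊆ ℂ. -/
def InO2 (a : ℂ) : Prop := ∃ m n : ℤ, a = (m : ℂ) + (n : ℂ) * sqrtNeg2

lemma inO2_iff (q r : ℚ) :
    InO2 ((q:ℂ) + (r:ℂ) * sqrtNeg2) ↔ (∃ m : ℤ, (m:ℚ) = q) ∧ (∃ n : ℤ, (n:ℚ) = r) := by
  constructor
  · rintro ⟨m, n, h⟩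
    have hre := congrArg Complex.re h
    have him := congrArg Complex.im h
    simp [sqrtNeg2, Complex.add_re, Complex.mul_re, Complex.mul_im] at hre him
    constructor
    · exact ⟨m, by exact_mod_cast hre.symm⟩
    · exact ⟨n, by exact_mod_cast him.symm⟩
  · rintro ⟨⟨m, hm⟩, ⟨n, hn⟩⟩
    exact ⟨m, n, by rw [← hm, ← hn]; push_cast; ring⟩

lemma InO2.zero : InO2 0 := ⟨0, 0, by simp⟩

lemma InO2.add {x y : ℂ} (hx : InO2 x) (hy : InO2 y) : InO2 (x + y) := by
  obtain ⟨m, n, rfl⟩ := hx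
  obtain ⟨m', n', rfl⟩ := hy
  exact ⟨m + m', n + n', by push_cast; ring⟩

lemma InO2.zsmul {x : ℂ} (z : ℤ) (hx : InO2 x) : InO2 (z • x) := by
  obtain ⟨m, n, rfl⟩ := hx
  exact ⟨z * m, z * n, by push_cast [zsmul_eq_mul]; ring⟩

lemma entry_formula (D : ℤ)
    (ρ' : ℍ[ℚ, -2, (D : ℚ)] →ₐ[ℚ] Matrix (Fin 2) (Fin 2) ℂ)
    (hi : ρ' (⟨0, 1, 0, 0⟩ : ℍ[ℚ, -2, (D : ℚ)]) =
      !![sqrtNeg2, 2 * sqrtNeg2 * (1 : ℂ) / 2; 0, -sqrtNeg2])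
    (hj : ρ' (⟨0, 0, 1, 0⟩ : ℍ[ℚ, -2, (D : ℚ)]) =
      !![-(1 : ℂ), ((D : ℂ) - (1 : ℂ) ^ 2) / 2; 2, 1])
    (a b c d : ℚ) :
    ρ' (⟨a, b, c, d⟩ : ℍ[ℚ, -2, (D : ℚ)]) =
      !![((a - c : ℚ) : ℂ) + ((b + d : ℚ) : ℂ) * sqrtNeg2,
         ((c * ((D:ℚ) - 1) / 2 : ℚ) : ℂ) + ((b + d * ((D:ℚ) + 1) / 2 : ℚ) : ℂ) * sqrtNeg2;
         ((2 * c : ℚ) : ℂ) + ((-(2 * d) : ℚ) : ℂ) * sqrtNeg2,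
         ((a + c : ℚ) : ℂ) + ((-(b + d) : ℚ) : ℂ) * sqrtNeg2] := by
  have hdecomp : (⟨a, b, c, d⟩ : ℍ[ℚ, -2, (D : ℚ)]) =
      a • 1 + b • (⟨0,1,0,0⟩ : ℍ[ℚ, -2, (D : ℚ)]) + c • ⟨0,0,1,0⟩ +
        d • ((⟨0,1,0,0⟩ : ℍ[ℚ, -2, (D : ℚ)]) * ⟨0,0,1,0⟩) := by
    ext <;> simp
  rw [hdecomp]
  simp only [map_add, map_smul, map_mul, map_one, hi, hj]
  ext k l
  fin_cases k <;> fin_cases l <;>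
    simp [Matrix.mul_apply, Fin.sum_univ_two, Matrix.smul_apply, Matrix.one_apply,
      Rat.smul_def] <;>
    push_cast <;> ring

/-- For D ≡ 1 (mod 4), the elements of Q = (−2,D)_ℚ whose image under ρ′
(with A = 2, B = 1) has all entries in O₂ form exactly the ℤ-order
ℤ[1, i, (1+j)/2, (i+ij)/2]. -/
theorem stmt_5 (D : ℤ) (hD : 0 < D) (hmod : D % 4 = 1)
    (ρ' : ℍ[ℚ, -2, (D : ℚ)] →ₐ[ℚ] Matrix (Fin 2) (Fin 2) ℂ)
    (hi : ρ' (⟨0, 1, 0, 0⟩ : ℍ[ℚ, -2, (D : ℚ)]) =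
      !![sqrtNeg2, 2 * sqrtNeg2 * (1 : ℂ) / 2; 0, -sqrtNeg2])
    (hj : ρ' (⟨0, 0, 1, 0⟩ : ℍ[ℚ, -2, (D : ℚ)]) =
      !![-(1 : ℂ), ((D : ℂ) - (1 : ℂ) ^ 2) / 2; 2, 1]) :
    {α : ℍ[ℚ, -2, (D : ℚ)] | ∀ k l : Fin 2, InO2 (ρ' α k l)} =
    (Submodule.span ℤ
      ({1, ⟨0, 1, 0, 0⟩, ⟨1/2, 0, 1/2, 0⟩, ⟨0, 1/2, 0, 1/2⟩} :
        Set ℍ[ℚ, -2, (D : ℚ)]) : Set ℍ[ℚ, -2, (D : ℚ)]) := by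
  obtain ⟨t, ht⟩ : ∃ t : ℤ, D = 4 * t + 1 := ⟨D / 4, by omega⟩
  apply Set.Subset.antisymm
  · -- forward: entries in O₂ ⟹ in the span
    rintro ⟨a, b, c, d⟩ hα
    simp only [Set.mem_setOf_eq, entry_formula D ρ' hi hj] at hα
    have h00 := hα 0 0
    have h10 := hα 1 0
    simp only [Matrix.cons_val', Matrix.cons_val_zero, Matrix.cons_val_one, Matrix.head_cons,
      Matrix.empty_val', Matrix.cons_val_fin_one, Matrix.head_fin_const, Matrix.of_apply] at h00 h10
    rw [inO2_iff] at h00 h10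
    obtain ⟨⟨m1, hm1⟩, ⟨n1, hn1⟩⟩ := h00
    obtain ⟨⟨p, hp⟩, ⟨q', hq'⟩⟩ := h10
    have key : (⟨a, b, c, d⟩ : ℍ[ℚ, -2, (D : ℚ)]) =
        m1 • (1 : ℍ[ℚ, -2, (D : ℚ)]) + (n1 + q') • (⟨0,1,0,0⟩ : ℍ[ℚ, -2, (D : ℚ)]) +
          p • (⟨1/2,0,1/2,0⟩ : ℍ[ℚ, -2, (D : ℚ)]) +
          (-q') • (⟨0,1/2,0,1/2⟩ : ℍ[ℚ, -2, (D : ℚ)]) := by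
      ext <;> simp [zsmul_eq_mul] <;> push_cast <;> linarith
    simp only [SetLike.mem_coe]
    rw [key]
    refine Submodule.add_mem _ (Submodule.add_mem _ (Submodule.add_mem _ ?_ ?_) ?_) ?_ <;>
      exact Submodule.smul_mem _ _ (Submodule.subset_span (by simp))
  · -- backward: the span is contained in the set
    intro α hα
    simp only [SetLike.mem_coe] at hα
    refine Submodule.span_induction ?_ ?_ ?_ ?_ hα
    · rintro x hx
      simp only [Set.mem_insert_iff, Set.mem_singleton_iff] at hx
      intro k l
      rcases hx with rfl | rfl | rfl | rfl
      · rw [show (1 : ℍ[ℚ, -2, (D : ℚ)]) = (⟨1,0,0,0⟩ : ℍ[ℚ, -2, (D : ℚ)]) from rfl,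
          entry_formula D ρ' hi hj]
        fin_cases k <;> fin_cases l <;> simp
        · refine ⟨1, 0, ?_⟩; push_cast; ring
        · refine ⟨0, 0, ?_⟩; push_cast; ring
        · refine ⟨0, 0, ?_⟩; push_cast; ring
        · refine ⟨1, 0, ?_⟩; push_cast; ring
      · rw [entry_formula D ρ' hi hj]
        fin_cases k <;> fin_cases l <;> simp
        · refine ⟨0, 1, ?_⟩; push_cast; ring
        · refine ⟨0, 1, ?_⟩; push_cast; ring
        · refine ⟨0, 0, ?_⟩; push_cast; ring
        · refine ⟨0, -1, ?_⟩; push_cast; ring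
      · rw [entry_formula D ρ' hi hj]
        fin_cases k <;> fin_cases l <;> simp
        · refine ⟨0, 0, ?_⟩; push_cast; ring
        · refine ⟨t, 0, ?_⟩; rw [ht]; push_cast; ring
        · refine ⟨1, 0, ?_⟩; push_cast; ring
        · refine ⟨1, 0, ?_⟩; push_cast; ring
      · rw [entry_formula D ρ' hi hj]
        fin_cases k <;> fin_cases l <;> simp
        · refine ⟨0, 1, ?_⟩; push_cast; ring
        · refine ⟨0, t + 1, ?_⟩; rw [ht]; push_cast; ring
        · refine ⟨0, -1, ?_⟩; push_cast; ring
        · refine ⟨0, -1, ?_⟩; push_cast; ring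
    · intro k l; simpa using InO2.zero
    · intro x y _ _ hx hy k l
      have h : ρ' (x + y) = ρ' x + ρ' y := map_add _ _ _
      rw [h, Matrix.add_apply]
      exact (hx k l).add (hy k l)
    · intro z x _ hx k l
      have h : ρ' (z • x) = z • ρ' x := map_zsmul ρ' z x
      rw [h, Matrix.smul_apply]
      exact (hx k l).zsmul z
end

section
/- Let D be a positive integer with D ≡ 3 (mod 4), and let ρ′ be the ℚ-algebra homomorphism from Q = (−2, D)_ℚ into 2×2 complex matrices determined by ρ′(i) = [[√−2, 2√−2·B/A],[0, −√−2]] and ρ′(j) = [[−B, (D − B²)/A],[A, B]] with A = 2 and B = 1 − √−2. Then the set {α ∈ Q : all four entries of ρ′(α) lie in O₂} is exactly the ℤ-submodule of Q spanned by 1, i, (1 + j + ij)/2, and (i + ij)/2; i.e. this set is the ℤ-order ℤ[1, i, (1+j+ij)/2, (i+ij)/2]. -/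
open Quaternion

lemma s_sq : sqrtNeg2 ^ 2 = -2 := by
  simp only [sqrtNeg2, mul_pow, Complex.I_sq, mul_neg_one]
  norm_cast
  rw [Real.sq_sqrt] <;> norm_num

lemma InO2_iff (a b : ℚ) :
    InO2 ((a:ℂ) + (b:ℂ) * sqrtNeg2) ↔ (∃ m : ℤ, a = m) ∧ (∃ n : ℤ, b = n) := by
  constructor
  · rintro ⟨m, n, h⟩
    rw [Complex.ext_iff] at h
    simp only [sqrtNeg2, Complex.add_re, Complex.add_im, Complex.mul_re, Complex.mul_im,
      Complex.ratCast_re, Complex.ratCast_im, Complex.intCast_re, Complex.intCast_im,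
      Complex.ofReal_re, Complex.ofReal_im, Complex.I_re, Complex.I_im] at h
    obtain ⟨h1, h2⟩ := h
    have hs : Real.sqrt 2 ≠ 0 := by positivity
    refine ⟨⟨m, ?_⟩, ⟨n, ?_⟩⟩
    · have : (a:ℝ) = m := by linarith [h1]
      exact_mod_cast this
    · have h2' : (b:ℝ) * Real.sqrt 2 = n * Real.sqrt 2 := by linarith [h2]
      have := mul_right_cancel₀ hs h2'
      exact_mod_cast this
  · rintro ⟨⟨m, hm⟩, ⟨n, hn⟩⟩
    exact ⟨m, n, by rw [hm, hn]; push_cast; ring⟩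

set_option maxHeartbeats 1000000 in
/-- For D ≡ 3 (mod 4), with A = 2, B = 1 − √−2, the entries-in-O₂ set is the ℤ-order ℤ[1, i, (1+j+ij)/2, (i+ij)/2]. -/
theorem stmt_9 (D : ℤ) (hD : 0 < D) (hmod : D % 4 = 3)
    (ρ' : ℍ[ℚ, -2, (D : ℚ)] →ₐ[ℚ] Matrix (Fin 2) (Fin 2) ℂ)
    (hi : ρ' (⟨0, 1, 0, 0⟩ : ℍ[ℚ, -2, (D : ℚ)]) =
      !![sqrtNeg2, 2 * sqrtNeg2 * (1 - sqrtNeg2) / (2 : ℂ); 0, -sqrtNeg2])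
    (hj : ρ' (⟨0, 0, 1, 0⟩ : ℍ[ℚ, -2, (D : ℚ)]) =
      !![-(1 - sqrtNeg2), ((D : ℂ) - (1 - sqrtNeg2) ^ 2) / (2 : ℂ); (2 : ℂ), (1 - sqrtNeg2)]) :
    {α : ℍ[ℚ, -2, (D : ℚ)] | ∀ k l : Fin 2, InO2 (ρ' α k l)} =
    (Submodule.span ℤ
      ({1, ⟨0, 1, 0, 0⟩, ⟨1/2, 0, 1/2, 1/2⟩, ⟨0, 1/2, 0, 1/2⟩} :
        Set ℍ[ℚ, -2, (D : ℚ)]) : Set ℍ[ℚ, -2, (D : ℚ)]) := by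
  obtain ⟨q, hq⟩ : ∃ q : ℤ, D = 4 * q + 3 := ⟨D / 4, by omega⟩
  have hqQ : (D : ℚ) = 4 * (q : ℚ) + 3 := by exact_mod_cast congrArg (Int.cast : ℤ → ℚ) hq
  -- entries formula
  have hentry : ∀ x y z w : ℚ, ρ' ⟨x, y, z, w⟩ =
      !![((x - z + 2*w : ℚ) : ℂ) + ((y + z + w : ℚ) : ℂ) * sqrtNeg2,
         ((2*y + 2*w + z*(D+1)/2 : ℚ) : ℂ) + ((y + z + w*(D-1)/2 : ℚ) : ℂ) * sqrtNeg2;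
         ((2*z : ℚ) : ℂ) + ((-(2*w) : ℚ) : ℂ) * sqrtNeg2,
         ((x + z - 2*w : ℚ) : ℂ) + ((-(y + z + w) : ℚ) : ℂ) * sqrtNeg2] := by
    intro x y z w
    have hmk : (⟨x,y,z,w⟩ : ℍ[ℚ, -2, (D:ℚ)]) =
        x • 1 + y • ⟨0,1,0,0⟩ + z • ⟨0,0,1,0⟩ + w • (⟨0,1,0,0⟩ * ⟨0,0,1,0⟩) := by
      ext <;> simp
    rw [hmk, map_add, map_add, map_add, map_smul, map_smul, map_smul, map_smul, map_one,
      map_mul, hi, hj]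
    ext i j
    fin_cases i <;> fin_cases j <;>
      simp [Matrix.mul_apply, Fin.sum_univ_two, Matrix.one_apply, Rat.smul_def] <;>
      push_cast
    · linear_combination (-(w:ℂ)) * s_sq
    · linear_combination ((-(y:ℂ) - (z:ℂ)/2 - w) + ((w:ℂ)/2) * sqrtNeg2) * s_sq
    · ring
    · linear_combination (w:ℂ) * s_sq
  -- the intermediate lattice
  set g1 : ℍ[ℚ, -2, (D:ℚ)] := 1 with hg1
  set g2 : ℍ[ℚ, -2, (D:ℚ)] := ⟨0,1,0,0⟩ with hg2
  set g3 : ℍ[ℚ, -2, (D:ℚ)] := ⟨1/2,0,1/2,1/2⟩ with hg3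
  set g4 : ℍ[ℚ, -2, (D:ℚ)] := ⟨0,1/2,0,1/2⟩ with hg4
  ext α
  obtain ⟨x, y, z, w⟩ := α
  simp only [Set.mem_setOf_eq, SetLike.mem_coe]
  rw [hentry x y z w]
  constructor
  · intro h
    have h00 := h 0 0
    have h01 := h 0 1
    have h10 := h 1 0
    have h11 := h 1 1
    simp only [Matrix.of_apply, Fin.isValue, Matrix.cons_val', Matrix.cons_val_zero,
      Matrix.cons_val_one, Matrix.head_cons, Matrix.empty_val', Matrix.cons_val_fin_one,
      Matrix.head_fin_const] at h00 h01 h10 h11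
    rw [InO2_iff] at h00 h10
    obtain ⟨⟨n1, hn1⟩, ⟨n2, hn2⟩⟩ := h00
    obtain ⟨⟨n5, hn5⟩, ⟨n6, hn6⟩⟩ := h10
    -- integers: x - z = n1 + n6, y + z - w = n2 + n6, 2z = n5, 2w = -n6
    have hx : x = (n1 + n6 : ℤ) + (n5:ℚ)/2 := by push_cast; push_cast at hn1 hn5 hn6; linarith
    have hy : y = (n2 + n6 : ℤ) + ((-n6 - n5 : ℤ):ℚ)/2 := by
      push_cast; push_cast at hn2 hn5 hn6; linarith
    have hz : z = (n5:ℚ)/2 := by push_cast at hn5; linarith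
    have hw : w = ((-n6:ℤ):ℚ)/2 := by push_cast at hn6; push_cast; linarith
    have hrepr : (⟨x,y,z,w⟩ : ℍ[ℚ, -2, (D:ℚ)]) =
        (n1 + n6) • g1 + (n2 + n6) • g2 + n5 • g3 + (-n6 - n5) • g4 := by
      ext <;>
        simp only [hg1, hg2, hg3, hg4, QuaternionAlgebra.re_add, QuaternionAlgebra.imI_add,
          QuaternionAlgebra.imJ_add, QuaternionAlgebra.imK_add, QuaternionAlgebra.re_smul,
          QuaternionAlgebra.imI_smul, QuaternionAlgebra.imJ_smul, QuaternionAlgebra.imK_smul,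
          QuaternionAlgebra.re_one, QuaternionAlgebra.imI_one, QuaternionAlgebra.imJ_one,
          QuaternionAlgebra.imK_one] <;>
        simp only [zsmul_eq_mul] <;>
        push_cast <;>
        [rw [hx]; rw [hy]; rw [hz]; rw [hw]] <;> push_cast <;> ring
    rw [hrepr]
    have m1 : g1 ∈ ({g1, g2, g3, g4} : Set ℍ[ℚ, -2, (D:ℚ)]) := by simp
    have m2 : g2 ∈ ({g1, g2, g3, g4} : Set ℍ[ℚ, -2, (D:ℚ)]) := by simp
    have m3 : g3 ∈ ({g1, g2, g3, g4} : Set ℍ[ℚ, -2, (D:ℚ)]) := by simp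
    have m4 : g4 ∈ ({g1, g2, g3, g4} : Set ℍ[ℚ, -2, (D:ℚ)]) := by simp
    exact Submodule.add_mem _
      (Submodule.add_mem _
        (Submodule.add_mem _
          (Submodule.smul_mem _ _ (Submodule.subset_span m1))
          (Submodule.smul_mem _ _ (Submodule.subset_span m2)))
        (Submodule.smul_mem _ _ (Submodule.subset_span m3)))
      (Submodule.smul_mem _ _ (Submodule.subset_span m4))
  · intro hmem
    -- characterize span membership by four integrality conditions
    have key : ∀ β ∈ Submodule.span ℤ ({g1, g2, g3, g4} : Set ℍ[ℚ, -2, (D:ℚ)]),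
        (∃ m : ℤ, β.re - β.imJ = m) ∧ (∃ m : ℤ, β.imI + β.imJ - β.imK = m) ∧
        (∃ m : ℤ, 2*β.imJ = m) ∧ (∃ m : ℤ, 2*β.imK = m) := by
      intro β hβ
      refine Submodule.span_induction ?_ ?_ ?_ ?_ hβ
      · rintro g hg
        simp only [Set.mem_insert_iff, Set.mem_singleton_iff] at hg
        rcases hg with rfl | rfl | rfl | rfl
        · refine ⟨⟨1, ?_⟩, ⟨0, ?_⟩, ⟨0, ?_⟩, ⟨0, ?_⟩⟩ <;>
            norm_num [hg1, QuaternionAlgebra.re_one, QuaternionAlgebra.imI_one,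
              QuaternionAlgebra.imJ_one, QuaternionAlgebra.imK_one]
        · exact ⟨⟨0, by norm_num⟩, ⟨1, by norm_num⟩, ⟨0, by norm_num⟩, ⟨0, by norm_num⟩⟩
        · exact ⟨⟨0, by norm_num⟩, ⟨0, by norm_num⟩, ⟨1, by norm_num⟩, ⟨1, by norm_num⟩⟩
        · exact ⟨⟨0, by norm_num⟩, ⟨0, by norm_num⟩, ⟨0, by norm_num⟩, ⟨1, by norm_num⟩⟩
      · exact ⟨⟨0, by norm_num⟩, ⟨0, by norm_num⟩, ⟨0, by norm_num⟩, ⟨0, by norm_num⟩⟩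
      · rintro a b - - ⟨⟨a1, ha1⟩, ⟨a2, ha2⟩, ⟨a3, ha3⟩, ⟨a4, ha4⟩⟩
          ⟨⟨b1, hb1⟩, ⟨b2, hb2⟩, ⟨b3, hb3⟩, ⟨b4, hb4⟩⟩
        refine ⟨⟨a1 + b1, ?_⟩, ⟨a2 + b2, ?_⟩, ⟨a3 + b3, ?_⟩, ⟨a4 + b4, ?_⟩⟩ <;>
          simp only [QuaternionAlgebra.re_add, QuaternionAlgebra.imI_add,
            QuaternionAlgebra.imJ_add, QuaternionAlgebra.imK_add] <;> push_cast <;> linarith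
      · rintro c a - ⟨⟨a1, ha1⟩, ⟨a2, ha2⟩, ⟨a3, ha3⟩, ⟨a4, ha4⟩⟩
        refine ⟨⟨c * a1, ?_⟩, ⟨c * a2, ?_⟩, ⟨c * a3, ?_⟩, ⟨c * a4, ?_⟩⟩ <;>
          simp only [QuaternionAlgebra.re_smul, QuaternionAlgebra.imI_smul,
            QuaternionAlgebra.imJ_smul, QuaternionAlgebra.imK_smul] <;>
          simp only [zsmul_eq_mul] <;> push_cast
        · linear_combination (c:ℚ) * ha1
        · linear_combination (c:ℚ) * ha2
        · linear_combination (c:ℚ) * ha3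
        · linear_combination (c:ℚ) * ha4
    have key' := key _ hmem
    simp only at key'
    obtain ⟨⟨m1, h1⟩, ⟨m2, h2⟩, ⟨m3, h3⟩, ⟨m4, h4⟩⟩ := key'
    intro k l
    fin_cases k <;> fin_cases l <;>
      simp only [Matrix.of_apply, Fin.isValue, Matrix.cons_val', Matrix.cons_val_zero,
        Matrix.cons_val_one, Matrix.head_cons, Matrix.empty_val', Matrix.cons_val_fin_one,
        Matrix.head_fin_const, Fin.mk_zero, Fin.mk_one] <;>
      rw [InO2_iff]
    · exact ⟨⟨m1 + m4, by push_cast; linarith⟩, ⟨m2 + m4, by push_cast; linarith⟩⟩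
    · constructor
      · refine ⟨2*m2 + 2*m4 + m3*q, ?_⟩
        push_cast
        linear_combination 2*h2 + 2*h4 + (q:ℚ)*h3 + (z/2)*hqQ
      · refine ⟨m2 + m4*(q+1), ?_⟩
        push_cast
        linear_combination h2 + ((q:ℚ)+1)*h4 + (w/2)*hqQ
    · exact ⟨⟨m3, by push_cast; linarith⟩, ⟨-m4, by push_cast; linarith⟩⟩
    · exact ⟨⟨m1 + m3 - m4, by push_cast; linarith⟩, ⟨-(m2 + m4), by push_cast; linarith⟩⟩
end

section
/- Let D be a positive integer with D ≡ 1 (mod 8), and let M be the ℤ-submodule of Q = (−2, D)_ℚ spanned by 1, i, (1+j)/2, (i+ij)/2. Then for every α ∈ M the quantity Δ(α) = trd(α)² − 4·nrd(α) is an integer with χ₈(Δ(α)) ≠ −1 (i.e. Δ(α) is never ≡ ±3 mod 8), and there exists α ∈ M with χ₈(Δ(α)) = 1. (This computes the Eichler symbol of the order M at the prime 2 to be +1.) -/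
open Quaternion

/-- Δ(α) = trd(α)² − 4·nrd(α) for α = t + xi + yj + zij in (−2,D)_ℚ, where
trd(α) = 2t and nrd(α) = t² + 2x² − Dy² − 2Dz². -/
def Delta (D : ℤ) (α : ℍ[ℚ, -2, (D : ℚ)]) : ℚ :=
  (2 * α.re) ^ 2 -
    4 * (α.re ^ 2 + 2 * α.imI ^ 2 - (D : ℚ) * α.imJ ^ 2 - 2 * (D : ℚ) * α.imK ^ 2)

lemma chi8_sq_ne : ∀ x : ZMod 8, ZMod.χ₈ (x ^ 2) ≠ -1 := by decide

lemma span_components (D : ℤ) (α : ℍ[ℚ, -2, (D : ℚ)])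
    (hα : α ∈ Submodule.span ℤ
        ({1, ⟨0, 1, 0, 0⟩, ⟨1/2, 0, 1/2, 0⟩, ⟨0, 1/2, 0, 1/2⟩} :
          Set ℍ[ℚ, -2, (D : ℚ)])) :
    ∃ a b c d : ℤ, α.re = a + c/2 ∧ α.imI = b + d/2 ∧ α.imJ = c/2 ∧ α.imK = d/2 := by
  induction hα using Submodule.span_induction with
  | mem x hx =>
    rcases hx with h | h | h | h
    · exact ⟨1, 0, 0, 0, by simp [h, QuaternionAlgebra.re_one, QuaternionAlgebra.imI_one,
        QuaternionAlgebra.imJ_one, QuaternionAlgebra.imK_one]⟩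
    · exact ⟨0, 1, 0, 0, by simp [h]⟩
    · exact ⟨0, 0, 1, 0, by simp [h]⟩
    · simp only [Set.mem_singleton_iff] at h
      exact ⟨0, 0, 0, 1, by simp [h]⟩
  | zero => exact ⟨0, 0, 0, 0, by simp⟩
  | add x y _ _ hx hy =>
    obtain ⟨a, b, c, d, h1, h2, h3, h4⟩ := hx
    obtain ⟨a', b', c', d', h1', h2', h3', h4'⟩ := hy
    refine ⟨a + a', b + b', c + c', d + d', ?_, ?_, ?_, ?_⟩ <;>
      simp only [QuaternionAlgebra.re_add, QuaternionAlgebra.imI_add,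
        QuaternionAlgebra.imJ_add, QuaternionAlgebra.imK_add, h1, h2, h3, h4,
        h1', h2', h3', h4'] <;> push_cast <;> ring
  | smul z x _ hx =>
    obtain ⟨a, b, c, d, h1, h2, h3, h4⟩ := hx
    have hz : z • x = ((z : ℚ)) • x := (Int.cast_smul_eq_zsmul ℚ z x).symm
    refine ⟨z * a, z * b, z * c, z * d, ?_, ?_, ?_, ?_⟩ <;>
      simp [hz, QuaternionAlgebra.re_smul, QuaternionAlgebra.imI_smul,
        QuaternionAlgebra.imJ_smul, QuaternionAlgebra.imK_smul, h1, h2, h3, h4] <;>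
      push_cast <;> ring

lemma delta_eq (D : ℤ) (α : ℍ[ℚ, -2, (D : ℚ)]) (a b c d : ℤ)
    (h1 : α.re = a + c/2) (h2 : α.imI = b + d/2) (h3 : α.imJ = c/2) (h4 : α.imK = d/2) :
    Delta D α = ((D * c ^ 2 + 2 * (D - 1) * d ^ 2 - 8 * b ^ 2 - 8 * b * d : ℤ) : ℚ) := by
  simp only [Delta, h1, h2, h3, h4]
  push_cast
  ring

/-- For D ≡ 1 (mod 8), every α in the order ℤ[1, i, (1+j)/2, (i+ij)/2] has Δ(α) an integer with χ₈(Δ(α)) ≠ −1, and some α has χ₈(Δ(α)) = 1: the Eichler symbol at 2 is +1. -/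
theorem stmt_13 (D : ℤ) (hD : 0 < D) (hmod : D % 8 = 1) :
    (∀ α ∈ Submodule.span ℤ
        ({1, ⟨0, 1, 0, 0⟩, ⟨1/2, 0, 1/2, 0⟩, ⟨0, 1/2, 0, 1/2⟩} :
          Set ℍ[ℚ, -2, (D : ℚ)]),
      ∃ n : ℤ, (n : ℚ) = Delta D α ∧ ZMod.χ₈ ((n : ℤ) : ZMod 8) ≠ (-1)) ∧
    (∃ α ∈ Submodule.span ℤ
        ({1, ⟨0, 1, 0, 0⟩, ⟨1/2, 0, 1/2, 0⟩, ⟨0, 1/2, 0, 1/2⟩} :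
          Set ℍ[ℚ, -2, (D : ℚ)]),
      ∃ n : ℤ, (n : ℚ) = Delta D α ∧ ZMod.χ₈ ((n : ℤ) : ZMod 8) = 1) := by
  have hD8 : ((D : ZMod 8)) = 1 := by
    have h8 : (8 : ℤ) ∣ D - 1 := by omega
    have := (ZMod.intCast_zmod_eq_zero_iff_dvd (D - 1) 8).mpr h8
    push_cast at this
    exact sub_eq_zero.mp this
  constructor
  · intro α hα
    obtain ⟨a, b, c, d, h1, h2, h3, h4⟩ := span_components D α hα
    refine ⟨D * c ^ 2 + 2 * (D - 1) * d ^ 2 - 8 * b ^ 2 - 8 * b * d,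
      (delta_eq D α a b c d h1 h2 h3 h4).symm, ?_⟩
    have : ((D * c ^ 2 + 2 * (D - 1) * d ^ 2 - 8 * b ^ 2 - 8 * b * d : ℤ) : ZMod 8)
        = (c : ZMod 8) ^ 2 := by
      push_cast
      rw [hD8]
      ring_nf
      simp [show (8 : ZMod 8) = 0 from by decide]
    rw [this]
    exact chi8_sq_ne _
  · refine ⟨⟨1/2, 0, 1/2, 0⟩, Submodule.subset_span (by simp), D, ?_, ?_⟩
    · rw [delta_eq D _ 0 0 1 0 (by simp) (by simp) (by simp) (by simp)]
      norm_num
    · rw [hD8]; decide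
end

section
/- Let D be a positive integer with D ≡ 5 (mod 8), and let M be the ℤ-submodule of Q = (−2, D)_ℚ spanned by 1, i, (1+j)/2, (i+ij)/2. Then for every α ∈ M the quantity Δ(α) = trd(α)² − 4·nrd(α) is an integer with χ₈(Δ(α)) ≠ 1 (i.e. Δ(α) is never ≡ ±1 mod 8), and there exists α ∈ M with χ₈(Δ(α)) = −1. (This computes the Eichler symbol of the order M at the prime 2 to be −1.) -/
open Quaternion

lemma chi8_aux : ∀ x : ZMod 8, ZMod.χ₈ (5 * x ^ 2) ≠ 1 := by decide

/-- For D ≡ 5 (mod 8), every α in the order ℤ[1, i, (1+j)/2, (i+ij)/2] has Δ(α) an integer with χ₈(Δ(α)) ≠ 1, and some α has χ₈(Δ(α)) = −1: the Eichler symbol at 2 is −1. -/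
theorem stmt_14 (D : ℤ) (hD : 0 < D) (hmod : D % 8 = 5) :
    (∀ α ∈ Submodule.span ℤ
        ({1, ⟨0, 1, 0, 0⟩, ⟨1/2, 0, 1/2, 0⟩, ⟨0, 1/2, 0, 1/2⟩} :
          Set ℍ[ℚ, -2, (D : ℚ)]),
      ∃ n : ℤ, (n : ℚ) = Delta D α ∧ ZMod.χ₈ ((n : ℤ) : ZMod 8) ≠ 1) ∧
    (∃ α ∈ Submodule.span ℤ
        ({1, ⟨0, 1, 0, 0⟩, ⟨1/2, 0, 1/2, 0⟩, ⟨0, 1/2, 0, 1/2⟩} :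
          Set ℍ[ℚ, -2, (D : ℚ)]),
      ∃ n : ℤ, (n : ℚ) = Delta D α ∧ ZMod.χ₈ ((n : ℤ) : ZMod 8) = (-1)) := by
  have hD8 : ((D : ZMod 8)) = 5 := by
    obtain ⟨k, hk⟩ : ∃ k, D = 8 * k + 5 := ⟨D / 8, by omega⟩
    rw [hk]; push_cast
    rw [show ((8 : ZMod 8)) = 0 from by decide]; ring
  constructor
  · intro α hα
    -- key: every element has imI = b + d/2, imJ = c/2, imK = d/2 for integers b,c,d
    have key : ∃ b c d : ℤ, α.imI = (b : ℚ) + d / 2 ∧ α.imJ = (c : ℚ) / 2 ∧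
        α.imK = (d : ℚ) / 2 := by
      induction hα using Submodule.span_induction with
      | mem x hx =>
        rcases hx with rfl | rfl | rfl | rfl
        · exact ⟨0, 0, 0, by norm_num, by norm_num, by norm_num⟩
        · exact ⟨1, 0, 0, by norm_num, by norm_num, by norm_num⟩
        · exact ⟨0, 1, 0, by norm_num, by norm_num, by norm_num⟩
        · exact ⟨0, 0, 1, by norm_num, by norm_num, by norm_num⟩
      | zero => exact ⟨0, 0, 0, by norm_num, by norm_num, by norm_num⟩
      | add x y _ _ hx hy =>
        obtain ⟨b1, c1, d1, h1, h2, h3⟩ := hx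
        obtain ⟨b2, c2, d2, g1, g2, g3⟩ := hy
        refine ⟨b1 + b2, c1 + c2, d1 + d2, ?_, ?_, ?_⟩ <;>
          simp only [QuaternionAlgebra.imI_add, QuaternionAlgebra.imJ_add,
            QuaternionAlgebra.imK_add, h1, h2, h3, g1, g2, g3] <;> push_cast <;> ring
      | smul s x _ hx =>
        obtain ⟨b, c, d, h1, h2, h3⟩ := hx
        refine ⟨s * b, s * c, s * d, ?_, ?_, ?_⟩ <;>
          simp only [QuaternionAlgebra.imI_smul, QuaternionAlgebra.imJ_smul,
            QuaternionAlgebra.imK_smul] <;>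
          simp only [zsmul_eq_mul, h1, h2, h3] <;> push_cast <;> ring
    obtain ⟨b, c, d, h1, h2, h3⟩ := key
    refine ⟨-8 * b ^ 2 - 8 * b * d - 2 * d ^ 2 + D * c ^ 2 + 2 * D * d ^ 2, ?_, ?_⟩
    · simp only [Delta, h1, h2, h3]
      push_cast
      ring
    · have : ((-8 * b ^ 2 - 8 * b * d - 2 * d ^ 2 + D * c ^ 2 + 2 * D * d ^ 2 : ℤ) :
          ZMod 8) = 5 * (c : ZMod 8) ^ 2 := by
        push_cast [hD8]
        have h8 : ((8 : ZMod 8)) = 0 := by decide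
        linear_combination (-b ^ 2 - b * d + d ^ 2 : ZMod 8) * h8
      rw [this]
      exact chi8_aux _
  · refine ⟨⟨1/2, 0, 1/2, 0⟩, Submodule.subset_span (by simp), D, ?_, ?_⟩
    · simp only [Delta]
      norm_num
      ring
    · rw [hD8]; decide
end
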